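/- No non-trivial additive kernel on persistence diagrams is stable with respect to the p-Wasserstein distance for p > 1: if k is symmetric, positive definite, additive (k(E∪F,G)=k(E,G)+k(F,G)), and there exists F with k(F,F) > 0, then for every constant C > 0 and every p with 1 < p ≤ ∞ there exist diagrams A, B with d_k(A,B) > C · d_{W,p}(A,B). -/

import Mathlib

/-!
Additivity gives `k (n • F) (n • F) = n² k F F` and `k (n • F) ∅ = 0`, so the kernel distance from
`n • F` to the empty diagram is `n √(k F F)`. Matching every point of `n • F` to the diagonal
bounds its `p`-Wasserstein distance to the empty diagram by a constant times `n ^ (1/p)`, and its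
bottleneck distance by a constant; both grow strictly slower than `n` once `p > 1`.
-/

open Real

/-- The ℓ∞ distance between two points of ℝ². -/
noncomputable def linfDist (u v : EuclideanSpace ℝ (Fin 2)) : ℝ :=
  max |u 0 - v 0| |u 1 - v 1|

/-- The p-Wasserstein distance between persistence diagrams (finite multisets of points),
defined as the infimum of the matching costs over all bijective matchings M between the two
diagrams, each augmented by finitely many points on the diagonal. -/
noncomputable def dW (p : ℝ)
    (A B : Multiset (EuclideanSpace ℝ (Fin 2))) : ℝ :=
  sInf {c : ℝ |
    ∃ M : Multiset (EuclideanSpace ℝ (Fin 2) × EuclideanSpace ℝ (Fin 2)),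
      (∃ DA, (∀ u ∈ DA, u 0 = u 1) ∧ M.map Prod.fst = A + DA) ∧
      (∃ DB, (∀ u ∈ DB, u 0 = u 1) ∧ M.map Prod.snd = B + DB) ∧
      c = ((M.map (fun uv => linfDist uv.1 uv.2 ^ p)).sum) ^ (1 / p)}

/-- The bottleneck distance between persistence diagrams: the infimum over all c ≥ 0 such
that some bijective matching between the augmented diagrams moves every point at
ℓ∞-distance at most c. -/
noncomputable def dB (A B : Multiset (EuclideanSpace ℝ (Fin 2))) : ℝ :=
  sInf {c : ℝ | 0 ≤ c ∧
    ∃ M : Multiset (EuclideanSpace ℝ (Fin 2) × EuclideanSpace ℝ (Fin 2)),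
      (∃ DA, (∀ u ∈ DA, u 0 = u 1) ∧ M.map Prod.fst = A + DA) ∧
      (∃ DB, (∀ u ∈ DB, u 0 = u 1) ∧ M.map Prod.snd = B + DB) ∧
      ∀ uv ∈ M, linfDist uv.1 uv.2 ≤ c}

open Filter Topology

noncomputable def diagonalPoint (u : EuclideanSpace ℝ (Fin 2)) : EuclideanSpace ℝ (Fin 2) :=
  WithLp.toLp 2 (fun _ => u 0)

lemma linfDist_nonneg (u v : EuclideanSpace ℝ (Fin 2)) : 0 ≤ linfDist u v :=
  (abs_nonneg _).trans (le_max_left _ _)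

noncomputable def diagonalMatching (A : Multiset (EuclideanSpace ℝ (Fin 2))) :
    Multiset (EuclideanSpace ℝ (Fin 2) × EuclideanSpace ℝ (Fin 2)) :=
  A.map fun u => (u, diagonalPoint u)

lemma diagonalMatching_map_fst (A : Multiset (EuclideanSpace ℝ (Fin 2))) :
    ∃ DA, (∀ u ∈ DA, u 0 = u 1) ∧ (diagonalMatching A).map Prod.fst = A + DA :=
  ⟨0, by simp, by simp [diagonalMatching, Multiset.map_map]⟩

lemma diagonalMatching_map_snd (A : Multiset (EuclideanSpace ℝ (Fin 2))) :
    ∃ DB, (∀ u ∈ DB, u 0 = u 1) ∧ (diagonalMatching A).map Prod.snd = 0 + DB := by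
  refine ⟨A.map diagonalPoint, ?_, by simp [diagonalMatching, Multiset.map_map]⟩
  rintro _ hu
  obtain ⟨v, -, rfl⟩ := Multiset.mem_map.mp hu
  rfl

lemma dW_zero_right_le (p : ℝ) (A : Multiset (EuclideanSpace ℝ (Fin 2))) :
    dW p A 0 ≤ (A.map fun u => linfDist u (diagonalPoint u) ^ p).sum ^ (1 / p) := by
  refine csInf_le ⟨0, ?_⟩
    ⟨diagonalMatching A, diagonalMatching_map_fst A, diagonalMatching_map_snd A, ?_⟩
  · rintro c ⟨M, -, -, rfl⟩
    refine rpow_nonneg (Multiset.sum_nonneg fun x hx => ?_) _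
    obtain ⟨uv, -, rfl⟩ := Multiset.mem_map.mp hx
    exact rpow_nonneg (linfDist_nonneg _ _) p
  · simp [diagonalMatching, Multiset.map_map]

lemma dW_nsmul_zero_right_le (p : ℝ) (n : ℕ) (A : Multiset (EuclideanSpace ℝ (Fin 2))) :
    dW p (n • A) 0 ≤
      (n : ℝ) ^ (1 / p) * (A.map fun u => linfDist u (diagonalPoint u) ^ p).sum ^ (1 / p) := by
  have hcost : 0 ≤ (A.map fun u => linfDist u (diagonalPoint u) ^ p).sum :=
    Multiset.sum_nonneg fun x hx => by
      obtain ⟨u, -, rfl⟩ := Multiset.mem_map.mp hx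
      exact rpow_nonneg (linfDist_nonneg _ _) p
  calc dW p (n • A) 0
      ≤ (n * (A.map fun u => linfDist u (diagonalPoint u) ^ p).sum) ^ (1 / p) := by
        simpa [Multiset.map_nsmul, Multiset.sum_nsmul] using dW_zero_right_le p (n • A)
    _ = _ := mul_rpow n.cast_nonneg hcost

lemma dB_zero_right_le {A : Multiset (EuclideanSpace ℝ (Fin 2))} {c : ℝ} (hc : 0 ≤ c)
    (hA : ∀ u ∈ A, linfDist u (diagonalPoint u) ≤ c) : dB A 0 ≤ c := by
  refine csInf_le ⟨0, fun _ h => h.1⟩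
    ⟨hc, diagonalMatching A, diagonalMatching_map_fst A, diagonalMatching_map_snd A, ?_⟩
  rintro _ huv
  obtain ⟨u, hu, rfl⟩ := Multiset.mem_map.mp huv
  exact hA u hu

lemma dB_nsmul_zero_right_le (n : ℕ) (A : Multiset (EuclideanSpace ℝ (Fin 2))) :
    dB (n • A) 0 ≤ (A.map fun u => linfDist u (diagonalPoint u)).sum := by
  have hterm : ∀ x ∈ A.map fun u => linfDist u (diagonalPoint u), 0 ≤ x := fun x hx => by
    obtain ⟨u, -, rfl⟩ := Multiset.mem_map.mp hx
    exact linfDist_nonneg _ _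
  refine dB_zero_right_le (Multiset.sum_nonneg hterm) fun u hu => ?_
  exact Multiset.single_le_sum hterm _
    (Multiset.mem_map_of_mem _ (Multiset.mem_nsmul.mp hu).2)

noncomputable def kernelDist {M : Type*} (k : M → M → ℝ) (A B : M) : ℝ :=
  √(k A A + k B B - 2 * k A B)

section AdditiveKernel

variable {M : Type*} [AddMonoid M] {k : M → M → ℝ}

lemma kernel_nsmul_left (hadd : ∀ E F G, k (E + F) G = k E G + k F G) (n : ℕ) (F G : M) :
    k (n • F) G = n * k F G := by
  simpa using map_nsmul (AddMonoidHom.mk' (k · G) (hadd · · G)) n F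

lemma kernelDist_nsmul_zero (hsymm : ∀ F G, k F G = k G F)
    (hadd : ∀ E F G, k (E + F) G = k E G + k F G) (n : ℕ) (F : M) :
    kernelDist k (n • F) 0 = n * √(k F F) := by
  have hzero : ∀ G, k 0 G = 0 := fun G => by simpa using kernel_nsmul_left hadd 0 0 G
  have hsq : k (n • F) (n • F) = (n : ℝ) ^ 2 * k F F := by
    rw [kernel_nsmul_left hadd, hsymm, kernel_nsmul_left hadd]; ring
  rw [kernelDist, hsq, hzero, hsymm (n • F), hzero, add_zero, mul_zero, sub_zero,
    sqrt_mul (sq_nonneg _), sqrt_sq n.cast_nonneg]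

end AdditiveKernel

lemma exists_nat_mul_rpow_lt (a : ℝ) {s r : ℝ} (hs : 0 < s) (hr : r < 1) :
    ∃ n : ℕ, a * (n : ℝ) ^ r < s * n := by
  have hlim : Tendsto (fun n : ℕ => a * (n : ℝ) ^ (r - 1)) atTop (𝓝 0) := by
    simpa using ((tendsto_rpow_neg_atTop (by linarith : 0 < 1 - r)).comp
      tendsto_natCast_atTop_atTop).const_mul a
  obtain ⟨n, hn, hn1⟩ := ((hlim.eventually (gt_mem_nhds hs)).and (eventually_ge_atTop 1)).exists
  have hpos : (0 : ℝ) < n := by exact_mod_cast hn1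
  refine ⟨n, ?_⟩
  calc a * (n : ℝ) ^ r = a * (n : ℝ) ^ (r - 1) * n := by
        rw [mul_assoc, ← rpow_add_one hpos.ne']; ring_nf
    _ < s * n := mul_lt_mul_of_pos_right hn hpos

theorem no_additive_kernel_stable_general
    (k : Multiset (EuclideanSpace ℝ (Fin 2)) → Multiset (EuclideanSpace ℝ (Fin 2)) → ℝ)
    (hsymm : ∀ F G, k F G = k G F)
    (hadd : ∀ E F G, k (E + F) G = k E G + k F G)
    (hnontriv : ∃ F, 0 < k F F) :
    ∀ C : ℝ, 0 < C →
      (∀ p : ℝ, 1 < p →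
        ∃ A B, C * dW p A B < Real.sqrt (k A A + k B B - 2 * k A B)) ∧
      (∃ A B, C * dB A B < Real.sqrt (k A A + k B B - 2 * k A B)) := by
  intro C hC
  obtain ⟨F, hF⟩ := hnontriv
  have hs : 0 < √(k F F) := sqrt_pos.mpr hF
  have hdist (n : ℕ) : √(k F F) * n = kernelDist k (n • F) 0 := by
    rw [kernelDist_nsmul_zero hsymm hadd, mul_comm]
  refine ⟨fun p hp => ?_, ?_⟩
  · set T := (F.map fun u => linfDist u (diagonalPoint u) ^ p).sum ^ (1 / p)
    obtain ⟨n, hn⟩ := exists_nat_mul_rpow_lt (C * T) hs (r := 1 / p)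
      (by rw [div_lt_one (by linarith)]; exact hp)
    refine ⟨n • F, 0, ?_⟩
    calc C * dW p (n • F) 0 ≤ C * ((n : ℝ) ^ (1 / p) * T) := by
          gcongr; exact dW_nsmul_zero_right_le p n F
      _ = C * T * (n : ℝ) ^ (1 / p) := by ring
      _ < kernelDist k (n • F) 0 := hn.trans_eq (hdist n)
  · set T := (F.map fun u => linfDist u (diagonalPoint u)).sum
    obtain ⟨n, hn⟩ := exists_nat_mul_rpow_lt (C * T) hs zero_lt_one
    refine ⟨n • F, 0, ?_⟩
    calc C * dB (n • F) 0 ≤ C * T := by gcongr; exact dB_nsmul_zero_right_le n F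
      _ = C * T * (n : ℝ) ^ (0 : ℝ) := by rw [rpow_zero, mul_one]
      _ < kernelDist k (n • F) 0 := hn.trans_eq (hdist n)

/-- no non-trivial additive positive definite kernel on persistence diagrams
is stable w.r.t. the p-Wasserstein distance for any 1 < p ≤ ∞ (the case p = ∞ being the
bottleneck distance). -/
theorem no_additive_kernel_stable
    (k : Multiset (EuclideanSpace ℝ (Fin 2)) → Multiset (EuclideanSpace ℝ (Fin 2)) → ℝ)
    (hsymm : ∀ F G, k F G = k G F)
    (hposdef : ∀ (m : ℕ) (F : Fin m → Multiset (EuclideanSpace ℝ (Fin 2))) (c : Fin m → ℝ),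
      0 ≤ ∑ i, ∑ j, c i * c j * k (F i) (F j))
    (hadd : ∀ E F G, k (E + F) G = k E G + k F G)
    (hnontriv : ∃ F, 0 < k F F) :
    ∀ C : ℝ, 0 < C →
      (∀ p : ℝ, 1 < p →
        ∃ A B, C * dW p A B < Real.sqrt (k A A + k B B - 2 * k A B)) ∧
      (∃ A B, C * dB A B < Real.sqrt (k A A + k B B - 2 * k A B)) :=
  no_additive_kernel_stable_general k hsymm hadd hnontriv
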